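/- arXiv:2202.03350 — 2 statements merged into one kernel-verified Lean document; each statement's English description precedes it below -/
import Mathlib

section
/- Let m be a Weber node of a configuration. If a robot at node a (with λ(a) ≥ 1) moves to an adjacent node b with d(b,m) = d(a,m) - 1, then the set of Weber nodes of the new configuration is a subset of the set of Weber nodes of the original configuration; that is, no meeting node that was not a Weber node before the move can become one after the move. -/
def mdist (a b : ℤ × ℤ) : ℕ := (a.1 - b.1).natAbs + (a.2 - b.2).natAbs

noncomputable def consistency (lam : (ℤ × ℤ) →₀ ℕ) (m : ℤ × ℤ) : ℕ :=
  lam.sum fun v k => mdist v m * k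

/-- A Weber node: a meeting node minimizing the consistency over `M`. -/
def IsWeber (lam : (ℤ × ℤ) →₀ ℕ) (M : Finset (ℤ × ℤ)) (m : ℤ × ℤ) : Prop :=
  m ∈ M ∧ ∀ m' ∈ M, consistency lam m ≤ consistency lam m'

/-!
Moving one robot from `a` to a neighbour `b` changes every consistency by `d(b,x) - d(a,x)`,
which lies in `[-1, 1]`. Since the move brings the robot closer to the Weber node `m`, its
consistency drops by exactly one, and no node's consistency drops by more. So, with `c'` the
consistency after the move, a node `m'` that is optimal afterwards satisfies
`c(m') ≤ c'(m') + 1 ≤ c'(m) + 1 = c(m)`, and is therefore already optimal before the move.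
-/

lemma mdist_le_mdist_add_mdist (a b c : ℤ × ℤ) : mdist a c ≤ mdist a b + mdist b c := by
  simp only [mdist]; omega

lemma consistency_add (f g : (ℤ × ℤ) →₀ ℕ) (x : ℤ × ℤ) :
    consistency (f + g) x = consistency f x + consistency g x :=
  Finsupp.sum_add_index' (fun _ => by simp) (fun _ _ _ => mul_add _ _ _)

lemma consistency_single_one (a x : ℤ × ℤ) :
    consistency (Finsupp.single a 1) x = mdist a x := by
  simp [consistency, Finsupp.sum_single_index]

section Move

variable {lam : (ℤ × ℤ) →₀ ℕ} {a : ℤ × ℤ}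

lemma consistency_move_add_mdist (ha : 1 ≤ lam a) (b x : ℤ × ℤ) :
    consistency (lam + Finsupp.single b 1 - Finsupp.single a 1) x + mdist a x =
      consistency lam x + mdist b x := by
  have hle : Finsupp.single a 1 ≤ lam + Finsupp.single b 1 := by
    rw [Finsupp.single_le_iff, Finsupp.add_apply]
    omega
  rw [← consistency_single_one, ← consistency_add, tsub_add_cancel_of_le hle,
    consistency_add, consistency_single_one]

lemma consistency_le_consistency_move_add_one (ha : 1 ≤ lam a) {b : ℤ × ℤ} (hab : mdist a b = 1)
    (x : ℤ × ℤ) :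
    consistency lam x ≤ consistency (lam + Finsupp.single b 1 - Finsupp.single a 1) x + 1 := by
  have hmove := consistency_move_add_mdist ha b x
  have htri := mdist_le_mdist_add_mdist a b x
  omega

lemma consistency_move_add_one_of_closer (ha : 1 ≤ lam a) {b m : ℤ × ℤ}
    (hb : mdist b m + 1 = mdist a m) :
    consistency (lam + Finsupp.single b 1 - Finsupp.single a 1) m + 1 = consistency lam m := by
  have hmove := consistency_move_add_mdist ha b m
  omega

end Move

theorem stmt_1_general (lam : (ℤ × ℤ) →₀ ℕ) (M : Finset (ℤ × ℤ))
    (m a b : ℤ × ℤ) (hm : IsWeber lam M m)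
    (ha : 1 ≤ lam a) (hab : mdist a b = 1) (hb : mdist b m + 1 = mdist a m) :
    ∀ m' : ℤ × ℤ,
      IsWeber (lam + Finsupp.single b 1 - Finsupp.single a 1) M m' →
        IsWeber lam M m' := by
  rintro m' ⟨hm'M, hm'min⟩
  refine ⟨hm'M, fun m'' hm'' => ?_⟩
  calc consistency lam m'
      ≤ consistency (lam + Finsupp.single b 1 - Finsupp.single a 1) m' + 1 :=
        consistency_le_consistency_move_add_one ha hab m'
    _ ≤ consistency (lam + Finsupp.single b 1 - Finsupp.single a 1) m + 1 :=
        Nat.add_le_add_right (hm'min m hm.1) 1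
    _ = consistency lam m := consistency_move_add_one_of_closer ha hb
    _ ≤ consistency lam m'' := hm.2 m'' hm''

theorem stmt_1 (lam : (ℤ × ℤ) →₀ ℕ) (M : Finset (ℤ × ℤ)) (hM : M.Nonempty)
    (m a b : ℤ × ℤ) (hm : IsWeber lam M m)
    (ha : 1 ≤ lam a) (hab : mdist a b = 1) (hb : mdist b m + 1 = mdist a m) :
    ∀ m' : ℤ × ℤ,
      IsWeber (lam + Finsupp.single b 1 - Finsupp.single a 1) M m' →
        IsWeber lam M m' :=
  stmt_1_general lam M m a b hm ha hab hb
end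

section
/- Let c be a point such that the robot configuration λ on ℤ×ℤ is invariant under the 180° rotation ρ(v) = 2c - v. Then for every node m, the consistency satisfies c(m) ≥ c(c), i.e., c globally minimizes the sum of weighted Manhattan distances over all nodes (not just meeting nodes). -/
def rot180 (c v : ℤ × ℤ) : ℤ × ℤ := (2 * c.1 - v.1, 2 * c.2 - v.2)

theorem Finsupp.sum_comp_of_involutive {α M N : Type*} [Zero M] [AddCommMonoid N]
    {σ : α → α} (hσ : Function.Involutive σ) (f : α →₀ M) (hf : ∀ a, f (σ a) = f a)
    (g : α → M → N) : (f.sum fun a b => g (σ a) b) = f.sum g := by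
  have hsupp : ∀ a ∈ f.support, σ a ∈ f.support := fun a ha => by
    simpa [Finsupp.mem_support_iff, hf a] using ha
  exact Finset.sum_nbij' σ σ hsupp hsupp (fun a _ => hσ a) (fun a _ => hσ a)
    (fun a _ => by rw [hf a])

theorem rot180_involutive (c : ℤ × ℤ) : Function.Involutive (rot180 c) := fun v => by
  simp [rot180]

theorem two_mul_mdist_le_mdist_add_mdist_rot180 (c v m : ℤ × ℤ) :
    2 * mdist v c ≤ mdist v m + mdist (rot180 c v) m := by
  simp only [mdist, rot180]
  omega

theorem consistency_comp_rot180 (lam : (ℤ × ℤ) →₀ ℕ) (c m : ℤ × ℤ)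
    (hsym : ∀ v, lam (rot180 c v) = lam v) :
    (lam.sum fun v k => mdist (rot180 c v) m * k) = consistency lam m :=
  Finsupp.sum_comp_of_involutive (rot180_involutive c) lam hsym fun v k => mdist v m * k

theorem stmt_6 (lam : (ℤ × ℤ) →₀ ℕ) (c : ℤ × ℤ)
    (hsym : ∀ v, lam (rot180 c v) = lam v) :
    ∀ m : ℤ × ℤ, consistency lam c ≤ consistency lam m := by
  intro m
  have h : 2 * consistency lam c ≤ 2 * consistency lam m :=
    calc 2 * consistency lam c = lam.sum fun v k => 2 * mdist v c * k := by
          simp only [consistency, Finsupp.mul_sum, mul_assoc]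
      _ ≤ lam.sum fun v k => (mdist v m + mdist (rot180 c v) m) * k :=
          Finsupp.sum_le_sum fun v _ =>
            Nat.mul_le_mul_right _ (two_mul_mdist_le_mdist_add_mdist_rot180 c v m)
      _ = 2 * consistency lam m := by
          simp only [add_mul, Finsupp.sum_add, consistency_comp_rot180 lam c m hsym]
          rw [consistency, two_mul]
  omega
end
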